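/- Let 𝒢 = P_m({u}, G_1, …, G_{m−1}) be the series graph where each G_i is a d_i-regular graph on n_i vertices, and let H be the graph obtained from 𝒢 by attaching a one-way infinite path at u. Fix j ∈ {1, …, m−1} and vertices a, b of G_j. Then for all real t, |⟨e_b, e^{−itA(H)} e_a⟩ − ⟨e_b, e^{−itA(G_j)} e_a⟩| ≤ 2/n_j. In particular, if G_j has perfect state transfer between a and b at time τ (|⟨e_b, e^{−iτA(G_j)} e_a⟩| = 1), then |⟨e_b, e^{−iτA(H)} e_a⟩| ≥ 1 − 2/n_j. -/

import Mathlib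

noncomputable section

open Matrix

/-- Vertices of the series graph `P_m({u}, G_1, …, G_{m-1})` (with `M = m - 1` joined
graphs) together with an attached one-way infinite tail: `Sum.inl ()` is the vertex `u`,
`Sum.inr (Sum.inl ⟨i, a⟩)` is the vertex `a` of the graph `G_{i+1}`, and
`Sum.inr (Sum.inr j)` is the tail vertex `q_{j+1}`. -/
abbrev SeriesV (M : ℕ) (nn : Fin M → ℕ) := Unit ⊕ ((Σ i : Fin M, Fin (nn i)) ⊕ ℕ)

/-- The vertex `a` of the `i`-th joined graph, as a vertex of the series graph. -/
def gv {M : ℕ} {nn : Fin M → ℕ} (i : Fin M) (a : Fin (nn i)) : SeriesV M nn :=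
  Sum.inr (Sum.inl ⟨i, a⟩)

/-- Adjacency in `H`: the edges inside each `G_i`; all edges between `V(G_i)` and
`V(G_{i+1})` (consecutive joins); all edges between `u` and `V(G_1)`; the edge `u q_1`;
and the path edges `q_j q_{j+1}` for `j ≥ 1`. -/
def seriesAdj (M : ℕ) (nn : Fin M → ℕ) (G : ∀ i : Fin M, SimpleGraph (Fin (nn i)))
    (x y : SeriesV M nn) : Prop :=
  (∃ (i : Fin M) (a b : Fin (nn i)), (G i).Adj a b ∧ x = gv i a ∧ y = gv i b) ∨
  (∃ (i j : Fin M) (a : Fin (nn i)) (b : Fin (nn j)), (j : ℕ) = (i : ℕ) + 1 ∧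
    ((x = gv i a ∧ y = gv j b) ∨ (y = gv i a ∧ x = gv j b))) ∨
  (∃ (i : Fin M) (a : Fin (nn i)), (i : ℕ) = 0 ∧
    ((x = Sum.inl () ∧ y = gv i a) ∨ (y = Sum.inl () ∧ x = gv i a))) ∨
  ((x = Sum.inl () ∧ y = Sum.inr (Sum.inr 0)) ∨ (y = Sum.inl () ∧ x = Sum.inr (Sum.inr 0))) ∨
  (∃ j : ℕ, (x = Sum.inr (Sum.inr j) ∧ y = Sum.inr (Sum.inr (j + 1))) ∨
    (y = Sum.inr (Sum.inr j) ∧ x = Sum.inr (Sum.inr (j + 1))))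

/-- The Hilbert space `ℓ²(V(H))`. -/
abbrev seriesSpace (M : ℕ) (nn : Fin M → ℕ) := lp (fun _ : SeriesV M nn => ℂ) 2

/-- The standard orthonormal basis vector `e_w` of `ℓ²(V(H))`. -/
def stdVec {M : ℕ} {nn : Fin M → ℕ} (w : SeriesV M nn) : seriesSpace M nn := lp.single 2 w 1

open scoped Classical

/-!
Let `ι` embed `ℓ²(V(G_j))` isometrically into `ℓ²(V(H))`. A vertex of `H` outside `G_j` is
adjacent either to all of `G_j` or to none of it, so on vectors with coordinate sum zero
`A(H) ∘ ι = ι ∘ A(G_j)`; since `G_j` is regular, `A(G_j)` preserves these vectors, and the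
intertwining passes to `e^{-itA}` and to its adjoint. Splitting `e_a = (e_a - 𝟙/n) + 𝟙/n` and
`e_b` likewise, the two amplitudes then agree except for the terms `⟨𝟙/n, U (𝟙/n)⟩` of the two
unitaries `U`, each of modulus at most `‖𝟙/n‖² = 1/n`.
-/

open scoped InnerProductSpace

section ExpIntertwining

variable {𝕜 E F : Type*} [RCLike 𝕜] [NormedAddCommGroup E] [NormedSpace 𝕜 E] [CompleteSpace E]
  [NormedAddCommGroup F] [NormedSpace 𝕜 F] [CompleteSpace F]

theorem ContinuousLinearMap.exp_apply_map_of_mapsTo {A : F →L[𝕜] F} {B : E →L[𝕜] E}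
    (J : E →L[𝕜] F) {W : Set E} (hB : Set.MapsTo B W W) (hAB : ∀ w ∈ W, A (J w) = J (B w))
    {w : E} (hw : w ∈ W) : NormedSpace.exp A (J w) = J (NormedSpace.exp B w) := by
  have hpow : ∀ n : ℕ, ∀ w ∈ W, (A ^ n) (J w) = J ((B ^ n) w) := by
    intro n
    induction n with
    | zero => simp
    | succ n ih =>
      intro w hw
      simp only [pow_succ, mul_apply_eq_comp, hAB w hw, ih _ (hB hw)]
  have hA := (NormedSpace.exp_series_hasSum_exp' (𝕂 := 𝕜) A).mapL (apply 𝕜 F (J w))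
  have hB := ((NormedSpace.exp_series_hasSum_exp' (𝕂 := 𝕜) B).mapL (apply 𝕜 E w)).mapL J
  refine hA.unique (hB.congr_fun fun n => ?_)
  simp [hpow n w hw]

end ExpIntertwining

section Unitary

variable {𝕜 𝔸 : Type*} [RCLike 𝕜] [NormedRing 𝔸] [NormedAlgebra 𝕜 𝔸] [StarRing 𝔸]
  [ContinuousStar 𝔸] [StarModule 𝕜 𝔸] {a : 𝔸}

theorem IsSelfAdjoint.star_exp_smul (ha : IsSelfAdjoint a) (z : 𝕜) :
    star (NormedSpace.exp (z • a)) = NormedSpace.exp (star z • a) := by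
  rw [NormedSpace.star_exp, star_smul, ha.star_eq]

theorem IsSelfAdjoint.exp_smul_mem_unitary [CompleteSpace 𝔸] (ha : IsSelfAdjoint a) {z : 𝕜}
    (hz : z ∈ skewAdjoint 𝕜) : NormedSpace.exp (z • a) ∈ unitary 𝔸 := by
  let _ : NormedAlgebra ℚ 𝔸 := NormedAlgebra.restrictScalars ℚ 𝕜 𝔸
  exact NormedSpace.exp_mem_unitary_of_mem_skewAdjoint (ha.smul_mem_skewAdjoint hz)

end Unitary

section Compression

variable {𝕜 E F : Type*} [RCLike 𝕜] [NormedAddCommGroup E] [InnerProductSpace 𝕜 E]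
  [CompleteSpace E] [NormedAddCommGroup F] [InnerProductSpace 𝕜 F] [CompleteSpace F]
  (ι : E →ₗᵢ[𝕜] F) {U : F →L[𝕜] F} {V : E →L[𝕜] E} {v w p q : E}

theorem inner_map_sub_inner_eq (hv : U (ι v) = ι (V v))
    (hw : U.adjoint (ι w) = ι (V.adjoint w)) :
    ⟪ι (w + q), U (ι (v + p))⟫_𝕜 - ⟪w + q, V (v + p)⟫_𝕜 = ⟪ι q, U (ι p)⟫_𝕜 - ⟪q, V p⟫_𝕜 := by
  have hcross : ⟪ι w, U (ι p)⟫_𝕜 = ⟪w, V p⟫_𝕜 := by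
    rw [← U.adjoint_inner_left, hw, ι.inner_map_map, V.adjoint_inner_left]
  simp only [map_add, inner_add_left, inner_add_right, hv, ι.inner_map_map, hcross]
  ring

theorem norm_inner_map_sub_inner_le (hU : U ∈ unitary (F →L[𝕜] F))
    (hV : V ∈ unitary (E →L[𝕜] E)) (hv : U (ι v) = ι (V v))
    (hw : U.adjoint (ι w) = ι (V.adjoint w)) :
    ‖⟪ι (w + q), U (ι (v + p))⟫_𝕜 - ⟪w + q, V (v + p)⟫_𝕜‖ ≤ 2 * (‖q‖ * ‖p‖) := by
  rw [inner_map_sub_inner_eq ι hv hw]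
  calc _ ≤ ‖⟪ι q, U (ι p)⟫_𝕜‖ + ‖⟪q, V p⟫_𝕜‖ := norm_sub_le _ _
    _ ≤ ‖ι q‖ * ‖U (ι p)‖ + ‖q‖ * ‖V p‖ :=
      add_le_add (norm_inner_le_norm _ _) (norm_inner_le_norm _ _)
    _ = 2 * (‖q‖ * ‖p‖) := by
      rw [ContinuousLinearMap.norm_map_of_mem_unitary hU,
        ContinuousLinearMap.norm_map_of_mem_unitary hV, ι.norm_map q, ι.norm_map p]
      ring

end Compression

section EuclideanIsometry

variable {𝕜 ι F : Type*} [RCLike 𝕜] [Fintype ι] [NormedAddCommGroup F] [InnerProductSpace 𝕜 F]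
  {v : ι → F}

def Orthonormal.euclideanIsometry (hv : Orthonormal 𝕜 v) : EuclideanSpace 𝕜 ι →ₗᵢ[𝕜] F :=
  (Fintype.linearCombination 𝕜 v ∘ₗ (WithLp.linearEquiv 2 𝕜 (ι → 𝕜)).toLinearMap).isometryOfInner
    fun x y => by simp [Fintype.linearCombination_apply, hv.inner_sum, PiLp.inner_apply, mul_comm]

theorem Orthonormal.euclideanIsometry_apply (hv : Orthonormal 𝕜 v) (x : EuclideanSpace 𝕜 ι) :
    hv.euclideanIsometry x = ∑ i, x i • v i := by
  simp [Orthonormal.euclideanIsometry, Fintype.linearCombination_apply]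

theorem Orthonormal.euclideanIsometry_single [DecidableEq ι] (hv : Orthonormal 𝕜 v) (i : ι) :
    hv.euclideanIsometry (EuclideanSpace.single i 1) = v i := by
  simp [hv.euclideanIsometry_apply, PiLp.single_apply]

end EuclideanIsometry

theorem Matrix.exp_apply_eq_inner_toEuclideanCLM {𝕜 n : Type*} [RCLike 𝕜] [Fintype n]
    [DecidableEq n] (X : Matrix n n 𝕜) (b a : n) :
    NormedSpace.exp X b a = ⟪EuclideanSpace.single b 1,
      NormedSpace.exp (toEuclideanCLM (𝕜 := 𝕜) X) (EuclideanSpace.single a 1)⟫_𝕜 := by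
  -- The L² operator norm induces the usual topology and makes `toEuclideanCLM` an isometry.
  have hexp : toEuclideanCLM (𝕜 := 𝕜) (NormedSpace.exp X) =
      NormedSpace.exp (toEuclideanCLM (𝕜 := 𝕜) X) := by
    open scoped Matrix.Norms.L2Operator in
    exact NormedSpace.map_exp_of_mem_ball (𝕂 := 𝕜) (toEuclideanCLM (𝕜 := 𝕜) (n := n))
      (by exact Isometry.continuous fun _ => congrFun rfl) X
      (by simp [NormedSpace.expSeries_radius_eq_top])
  rw [← hexp, EuclideanSpace.inner_single_left, ofLp_toEuclideanCLM]
  simp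

theorem SimpleGraph.IsRegularOfDegree.sum_adjMatrix_mulVec {V α : Type*} [Fintype V]
    [NonAssocSemiring α] {G : SimpleGraph V} [DecidableRel G.Adj] {d : ℕ}
    (hd : G.IsRegularOfDegree d) (x : V → α) : ∑ v, (G.adjMatrix α *ᵥ x) v = d • ∑ v, x v := by
  simp only [adjMatrix_mulVec_apply]
  rw [Finset.sum_comm' (t' := Finset.univ) (s' := fun u => G.neighborFinset u)
    (by simp [adj_comm])]
  simp [Finset.smul_sum, hd _]

section SeriesGraph

variable {M : ℕ} {nn : Fin M → ℕ}

theorem gv_injective (j : Fin M) : Function.Injective (gv (nn := nn) j) :=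
  Sum.inr_injective.comp (Sum.inl_injective.comp sigma_mk_injective)

theorem inner_stdVec_left (x : SeriesV M nn) (f : seriesSpace M nn) : ⟪stdVec x, f⟫_ℂ = f x := by
  simp [stdVec, lp.inner_single_left]

theorem orthonormal_stdVec : Orthonormal ℂ (stdVec : SeriesV M nn → seriesSpace M nn) := by
  rw [orthonormal_iff_ite]
  intro x y
  rw [inner_stdVec_left]
  simp [stdVec, lp.single_apply, Pi.single_apply]

def seriesEmbedding (j : Fin M) : EuclideanSpace ℂ (Fin (nn j)) →ₗᵢ[ℂ] seriesSpace M nn :=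
  (orthonormal_stdVec.comp _ (gv_injective j)).euclideanIsometry

theorem seriesEmbedding_single (j : Fin M) (a : Fin (nn j)) :
    seriesEmbedding j (EuclideanSpace.single a 1) = stdVec (gv j a) :=
  Orthonormal.euclideanIsometry_single _ a

theorem inner_stdVec_seriesEmbedding (x : SeriesV M nn) (j : Fin M)
    (w : EuclideanSpace ℂ (Fin (nn j))) :
    ⟪stdVec x, seriesEmbedding j w⟫_ℂ = ∑ c, w c * if x = gv j c then 1 else 0 := by
  simp [seriesEmbedding, Orthonormal.euclideanIsometry_apply,
    orthonormal_iff_ite.mp orthonormal_stdVec]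

variable (G : ∀ i : Fin M, SimpleGraph (Fin (nn i)))

theorem seriesAdj_gv_gv {j : Fin M} {c c' : Fin (nn j)} :
    seriesAdj M nn G (gv j c) (gv j c') ↔ (G j).Adj c c' := by
  refine ⟨?_, fun h => Or.inl ⟨j, c, c', h, rfl, rfl⟩⟩
  rintro (⟨i, a, b, hab, ⟨⟩, ⟨⟩⟩ | ⟨i, k, a, b, hk, ⟨⟨⟩, ⟨⟩⟩ | ⟨⟨⟩, ⟨⟩⟩⟩ |
    ⟨i, a, -, ⟨⟨⟩, -⟩ | ⟨⟨⟩, -⟩⟩ | (⟨⟨⟩, -⟩ | ⟨⟨⟩, -⟩) | ⟨k, ⟨⟨⟩, -⟩ | ⟨⟨⟩, -⟩⟩)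
  · exact hab
  all_goals omega

theorem seriesAdj_gv_of_forall_ne {j : Fin M} {x : SeriesV M nn} (hx : ∀ a, x ≠ gv j a)
    {c : Fin (nn j)} (c' : Fin (nn j)) (h : seriesAdj M nn G x (gv j c)) :
    seriesAdj M nn G x (gv j c') := by
  rcases h with ⟨i, a, b, -, hxa, ⟨⟩⟩ | ⟨i, k, a, b, hk, ⟨hxa, ⟨⟩⟩ | ⟨⟨⟩, hxb⟩⟩ |
    ⟨i, a, hi, ⟨hxu, ⟨⟩⟩ | ⟨⟨⟩, -⟩⟩ | (⟨-, ⟨⟩⟩ | ⟨⟨⟩, -⟩) | ⟨k, ⟨-, ⟨⟩⟩ | ⟨⟨⟩, -⟩⟩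
  · exact absurd hxa (hx a)
  · exact Or.inr (Or.inl ⟨i, j, a, c', hk, Or.inl ⟨hxa, rfl⟩⟩)
  · exact Or.inr (Or.inl ⟨j, k, c', b, hk, Or.inr ⟨rfl, hxb⟩⟩)
  · exact Or.inr (Or.inr (Or.inl ⟨j, c', hi, Or.inl ⟨hxu, rfl⟩⟩))

def IsSeriesAdjacencyOperator (A : seriesSpace M nn →L[ℂ] seriesSpace M nn) : Prop :=
  ∀ x y : SeriesV M nn, ⟪stdVec x, A (stdVec y)⟫_ℂ = if seriesAdj M nn G x y then 1 else 0

variable {G} {A : seriesSpace M nn →L[ℂ] seriesSpace M nn}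

theorem IsSeriesAdjacencyOperator.inner_stdVec_apply_seriesEmbedding
    (hA : IsSeriesAdjacencyOperator G A) (x : SeriesV M nn) (j : Fin M)
    (w : EuclideanSpace ℂ (Fin (nn j))) :
    ⟪stdVec x, A (seriesEmbedding j w)⟫_ℂ =
      ∑ c, w c * if seriesAdj M nn G x (gv j c) then 1 else 0 := by
  simp [seriesEmbedding, Orthonormal.euclideanIsometry_apply, hA x]

variable [∀ i, DecidableRel (G i).Adj]

theorem IsSeriesAdjacencyOperator.apply_seriesEmbedding_of_sum_eq_zero
    (hA : IsSeriesAdjacencyOperator G A) {j : Fin M} {w : EuclideanSpace ℂ (Fin (nn j))}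
    (hw : ∑ c, w c = 0) :
    A (seriesEmbedding j w) = seriesEmbedding j (toEuclideanCLM (𝕜 := ℂ) ((G j).adjMatrix ℂ) w) := by
  refine lp.ext (funext fun x => ?_)
  rw [← inner_stdVec_left, ← inner_stdVec_left, hA.inner_stdVec_apply_seriesEmbedding,
    inner_stdVec_seriesEmbedding]
  by_cases hx : ∃ c, x = gv j c
  · obtain ⟨c, rfl⟩ := hx
    simp [seriesAdj_gv_gv, (gv_injective j).eq_iff, ofLp_toEuclideanCLM, mulVec, dotProduct,
      SimpleGraph.adjMatrix_apply, mul_comm]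
  · push Not at hx
    -- `x` sees either every vertex of `G j` or none, hence `∑ c, w c` or nothing.
    by_cases hadj : ∃ c, seriesAdj M nn G x (gv j c)
    · obtain ⟨c, hc⟩ := hadj
      simp [seriesAdj_gv_of_forall_ne G hx _ hc, hx, hw]
    · push Not at hadj
      simp [hadj, hx]

theorem IsSeriesAdjacencyOperator.exp_smul_apply_seriesEmbedding
    (hA : IsSeriesAdjacencyOperator G A) {j : Fin M} {d : ℕ} (hreg : (G j).IsRegularOfDegree d)
    (s : ℂ) {w : EuclideanSpace ℂ (Fin (nn j))} (hw : ∑ c, w c = 0) :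
    NormedSpace.exp (s • A) (seriesEmbedding j w) =
      seriesEmbedding j (NormedSpace.exp (s • toEuclideanCLM (𝕜 := ℂ) ((G j).adjMatrix ℂ)) w) := by
  refine ContinuousLinearMap.exp_apply_map_of_mapsTo (seriesEmbedding j).toContinuousLinearMap
    (W := {u : EuclideanSpace ℂ (Fin (nn j)) | ∑ c, u c = 0}) (fun u hu => ?_) (fun u hu => ?_) hw
  · simp only [Set.mem_ofPred_eq, _root_.smul_apply, PiLp.smul_apply, smul_eq_mul,
      ← Finset.mul_sum, ofLp_toEuclideanCLM, hreg.sum_adjMatrix_mulVec] at hu ⊢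
    rw [hu, smul_zero, mul_zero]
  · simp [hA.apply_seriesEmbedding_of_sum_eq_zero hu]

end SeriesGraph

/-- The orthogonal projection of every `EuclideanSpace.single a 1` onto the constant vectors. -/
def uniformVec (n : ℕ) : EuclideanSpace ℂ (Fin n) := WithLp.toLp 2 fun _ => (n : ℂ)⁻¹

theorem sum_single_sub_uniformVec {n : ℕ} (a : Fin n) :
    ∑ c, (EuclideanSpace.single a (1 : ℂ) - uniformVec n) c = 0 := by
  have : (n : ℂ) ≠ 0 := Nat.cast_ne_zero.mpr a.pos.ne'
  simp [uniformVec, Finset.sum_sub_distrib, this]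

theorem norm_uniformVec_mul_self (n : ℕ) : ‖uniformVec n‖ * ‖uniformVec n‖ = 1 / n := by
  rw [EuclideanSpace.norm_eq, Real.mul_self_sqrt (by positivity)]
  simp [uniformVec]
  field_simp

theorem norm_inner_exp_sub_exp_apply_le {M : ℕ} {nn : Fin M → ℕ}
    {G : ∀ i : Fin M, SimpleGraph (Fin (nn i))} [∀ i, DecidableRel (G i).Adj] {j : Fin M}
    {d : ℕ} (hreg : (G j).IsRegularOfDegree d) {A : seriesSpace M nn →L[ℂ] seriesSpace M nn}
    (hsa : IsSelfAdjoint A) (hA : IsSeriesAdjacencyOperator G A) (a b : Fin (nn j)) (t : ℝ) :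
    ‖⟪stdVec (gv j b), NormedSpace.exp ((-(t : ℂ) * Complex.I) • A) (stdVec (gv j a))⟫_ℂ
        - NormedSpace.exp ((-(t : ℂ) * Complex.I) • (G j).adjMatrix ℂ) b a‖ ≤ 2 / (nn j : ℝ) := by
  have hB : IsSelfAdjoint (toEuclideanCLM (𝕜 := ℂ) ((G j).adjMatrix ℂ)) :=
    (SimpleGraph.isHermitian_adjMatrix (R := ℂ) (G j)).isSelfAdjoint.map _
  have hz : -(t : ℂ) * Complex.I ∈ skewAdjoint ℂ := by
    simp [skewAdjoint.mem_iff, Complex.conj_ofReal]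
  rw [Matrix.exp_apply_eq_inner_toEuclideanCLM, map_smul, ← seriesEmbedding_single,
    ← seriesEmbedding_single, ← sub_add_cancel (EuclideanSpace.single a 1) (uniformVec _),
    ← sub_add_cancel (EuclideanSpace.single b 1) (uniformVec _)]
  refine (norm_inner_map_sub_inner_le (seriesEmbedding j) (hsa.exp_smul_mem_unitary hz)
    (hB.exp_smul_mem_unitary hz)
    (hA.exp_smul_apply_seriesEmbedding hreg _ (sum_single_sub_uniformVec a)) ?_).trans ?_
  · rw [← ContinuousLinearMap.star_eq_adjoint, ← ContinuousLinearMap.star_eq_adjoint,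
      hsa.star_exp_smul, hB.star_exp_smul]
    exact hA.exp_smul_apply_seriesEmbedding hreg _ (sum_single_sub_uniformVec b)
  · rw [norm_uniformVec_mul_self, mul_one_div]

theorem series_transfer_bound_general (M : ℕ) (nn : Fin M → ℕ) (dd : Fin M → ℕ)
    (G : ∀ i : Fin M, SimpleGraph (Fin (nn i))) [∀ i, DecidableRel (G i).Adj]
    (hreg : ∀ i : Fin M, (G i).IsRegularOfDegree (dd i))
    (A : seriesSpace M nn →L[ℂ] seriesSpace M nn) (hsa : IsSelfAdjoint A)
    (hA : ∀ x y : SeriesV M nn, (inner ℂ (stdVec x) (A (stdVec y)) : ℂ)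
      = if seriesAdj M nn G x y then 1 else 0)
    (j : Fin M) (a b : Fin (nn j)) :
    (∀ t : ℝ,
      ‖((inner ℂ (stdVec (gv j b))
              (NormedSpace.exp ((-(t : ℂ) * Complex.I) • A) (stdVec (gv j a))) : ℂ)
            - NormedSpace.exp ((-(t : ℂ) * Complex.I) • (G j).adjMatrix ℂ) b a)‖
        ≤ 2 / (nn j : ℝ)) ∧
    (∀ τ : ℝ,
      ‖(NormedSpace.exp ((-(τ : ℂ) * Complex.I) • (G j).adjMatrix ℂ) b a)‖ = 1 →
      1 - 2 / (nn j : ℝ)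
        ≤ ‖(inner ℂ (stdVec (gv j b))
              (NormedSpace.exp ((-(τ : ℂ) * Complex.I) • A) (stdVec (gv j a))) : ℂ)‖) := by
  have hdiff := norm_inner_exp_sub_exp_apply_le (hreg j) hsa hA a b
  refine ⟨hdiff, fun τ hτ => ?_⟩
  have h := abs_sub_le_iff.mp ((abs_norm_sub_norm_le _ _).trans (hdiff τ))
  rw [hτ] at h
  linarith [h.2]

/-- Let `𝒢 = P_m({u}, G_1, …, G_{m-1})` be a series graph, each `G_i` being `d_i`-regular
on `n_i` vertices, and let `H` be `𝒢` with a one-way infinite path attached at `u`.  For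
vertices `a, b` of `G_j` and all real `t`,
`|⟨e_b, e^{-itA(H)} e_a⟩ - ⟨e_b, e^{-itA(G_j)} e_a⟩| ≤ 2/n_j`; in particular if `G_j` has
perfect state transfer between `a` and `b` at time `τ` then
`|⟨e_b, e^{-iτA(H)} e_a⟩| ≥ 1 - 2/n_j`. -/
theorem series_transfer_bound (M : ℕ) (hM : 1 ≤ M) (nn : Fin M → ℕ) (dd : Fin M → ℕ)
    (G : ∀ i : Fin M, SimpleGraph (Fin (nn i))) [∀ i, DecidableRel (G i).Adj]
    (hreg : ∀ i : Fin M, (G i).IsRegularOfDegree (dd i))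
    (A : seriesSpace M nn →L[ℂ] seriesSpace M nn) (hsa : IsSelfAdjoint A)
    (hA : ∀ x y : SeriesV M nn, (inner ℂ (stdVec x) (A (stdVec y)) : ℂ)
      = if seriesAdj M nn G x y then 1 else 0)
    (j : Fin M) (a b : Fin (nn j)) :
    (∀ t : ℝ,
      ‖((inner ℂ (stdVec (gv j b))
              (NormedSpace.exp ((-(t : ℂ) * Complex.I) • A) (stdVec (gv j a))) : ℂ)
            - NormedSpace.exp ((-(t : ℂ) * Complex.I) • (G j).adjMatrix ℂ) b a)‖
        ≤ 2 / (nn j : ℝ)) ∧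
    (∀ τ : ℝ,
      ‖(NormedSpace.exp ((-(τ : ℂ) * Complex.I) • (G j).adjMatrix ℂ) b a)‖ = 1 →
      1 - 2 / (nn j : ℝ)
        ≤ ‖(inner ℂ (stdVec (gv j b))
              (NormedSpace.exp ((-(τ : ℂ) * Complex.I) • A) (stdVec (gv j a))) : ℂ)‖) :=
  series_transfer_bound_general M nn dd G hreg A hsa hA j a b
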